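/- arXiv:math/9804120 — 4 statements merged into one kernel-verified Lean document; each statement's English description precedes it below -/
import Mathlib

section
/- Let L/F be a finite Galois extension of fields with Galois group G, and let S be a finite G-set. Let L[S] denote the L-vector space with basis indexed by S, on which G acts semilinearly by g(∑ ℓ_s [s]) = ∑ g(ℓ_s) [g(s)]. Then the natural map (L[S])^G ⊗_F L → L[S] is an isomorphism of L-vector spaces. -/
/-!
The inverse is written down explicitly. The Galois trace `Tr f = ∑_g g · f`, with
`(g · f)(t) = g (f (g⁻¹ • t))`, maps `L[S]` into the invariants and acts on an invariant `x`
by `Tr (ℓ • x) = Tr_{L/F}(ℓ) • x`. Choosing bases `(bᵢ)`, `(dᵢ)` of `L/F` dual for the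
trace form, `f ↦ ∑ᵢ Tr (bᵢ • f) ⊗ dᵢ` is then a left inverse by the dual-basis expansion
`ℓ = ∑ᵢ Tr_{L/F}(ℓ bᵢ) dᵢ`, and a right inverse because `∑ᵢ dᵢ g(bᵢ) = δ_{g,1}`, which
follows from Dedekind's independence of the automorphisms `g`.
-/

open scoped TensorProduct

/-- The `F`-subspace of Galois-invariant elements of `L[S] = (S → L)` under the
semilinear action `g (∑ ℓ_s [s]) = ∑ g(ℓ_s) [g • s]`. -/
def galoisInvariants (F L : Type*) [Field F] [Field L] [Algebra F L]
    (S : Type*) [MulAction (L ≃ₐ[F] L) S] : Submodule F (S → L) where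
  carrier := {f | ∀ (g : L ≃ₐ[F] L) (s : S), g (f s) = f (g • s)}
  add_mem' := by
    intro f h hf hh g s
    simp only [Pi.add_apply, map_add, hf g s, hh g s]
  zero_mem' := by
    intro g s
    simp
  smul_mem' := by
    intro c f hf g s
    simp only [Pi.smul_apply, Algebra.smul_def, map_mul, AlgEquiv.commutes, hf g s]

/-- The natural `F`-linear map `(L[S])^G ⊗_F L → L[S]`, `x ⊗ ℓ ↦ ℓ • x`. -/
noncomputable def galoisInvariantsTensorMap (F L : Type*) [Field F] [Field L] [Algebra F L]
    (S : Type*) [MulAction (L ≃ₐ[F] L) S] :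
    (galoisInvariants F L S) ⊗[F] L →ₗ[F] (S → L) :=
  TensorProduct.lift
    (LinearMap.mk₂ F (fun x ℓ => ℓ • (x : S → L))
      (fun x y ℓ => by simp only [Submodule.coe_add, smul_add])
      (fun c x ℓ => by simp only [Submodule.coe_smul]; exact smul_comm ℓ c _)
      (fun x ℓ₁ ℓ₂ => add_smul ℓ₁ ℓ₂ _)
      (fun c x ℓ => smul_assoc c ℓ (x : S → L)))

open Module

def IsTraceDual (F : Type*) {L ι : Type*} [Field F] [Field L] [Algebra F L] [Fintype ι]
    (b d : ι → L) : Prop :=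
  ∀ ℓ : L, ∑ i, Algebra.trace F L (ℓ * b i) • d i = ℓ

section Dedekind

variable {F L : Type*} [Field F] [Field L] [Algebra F L] [FiniteDimensional F L]

theorem AlgEquiv.eq_zero_of_forall_sum_mul_apply_eq_zero {c : (L ≃ₐ[F] L) → L}
    (h : ∀ ℓ : L, ∑ g, c g * g ℓ = 0) : c = 0 := by
  have hli : LinearIndependent L (fun g : L ≃ₐ[F] L => (g : L → L)) :=
    (linearIndependent_monoidHom L L).comp (fun g : L ≃ₐ[F] L => (g : L →* L))
      fun g h hgh => AlgEquiv.ext (DFunLike.congr_fun hgh :)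
  funext g
  exact Fintype.linearIndependent_iff.mp hli c (funext fun ℓ => by simpa using h ℓ) g

variable [IsGalois F L] {ι : Type*} [Fintype ι]

open Classical in
theorem sum_mul_algEquiv_apply_of_isTraceDual {b d : ι → L}
    (hbd : IsTraceDual F b d) (g : L ≃ₐ[F] L) :
    ∑ i, d i * g (b i) = if g = 1 then 1 else 0 := by
  have hsum : ∀ ℓ, ∑ g : L ≃ₐ[F] L, (∑ i, d i * g (b i)) * g ℓ = ℓ := fun ℓ => by
    simp_rw [Finset.sum_mul, mul_assoc, ← map_mul]
    rw [Finset.sum_comm]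
    simp_rw [← Finset.mul_sum, ← trace_eq_sum_automorphisms, mul_comm (d _),
      ← Algebra.smul_def, mul_comm (b _)]
    exact hbd ℓ
  have h := AlgEquiv.eq_zero_of_forall_sum_mul_apply_eq_zero
    (c := fun g => ∑ i, d i * g (b i) - if g = 1 then 1 else 0) fun ℓ => by
      simp only [sub_mul, ite_mul, one_mul, zero_mul, Finset.sum_sub_distrib, Finset.sum_ite_eq',
        Finset.mem_univ, if_true, AlgEquiv.one_apply]
      exact sub_eq_zero.mpr (hsum ℓ)
  exact sub_eq_zero.mp (congrFun h g)

end Dedekind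

section GaloisTrace

variable (F L : Type*) [Field F] [Field L] [Algebra F L] [FiniteDimensional F L]
  (S : Type*) [MulAction (L ≃ₐ[F] L) S]

noncomputable def galoisTrace : (S → L) →ₗ[F] galoisInvariants F L S where
  toFun f := ⟨fun t => ∑ g : L ≃ₐ[F] L, g (f (g⁻¹ • t)), fun h t => by
    rw [map_sum]
    exact Fintype.sum_equiv (Equiv.mulLeft h) _ _ fun g => by simp [mul_smul]⟩
  map_add' f f' := by ext t; simp [Finset.sum_add_distrib]
  map_smul' c f := by ext t; simp [Finset.mul_sum, Algebra.smul_def]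

variable {F L S}

theorem galoisTrace_apply (f : S → L) (t : S) :
    (galoisTrace F L S f : S → L) t = ∑ g : L ≃ₐ[F] L, g (f (g⁻¹ • t)) := rfl

theorem galoisTrace_smul_of_mem [IsGalois F L] (ℓ : L) {x : S → L}
    (hx : x ∈ galoisInvariants F L S) :
    galoisTrace F L S (ℓ • x) = Algebra.trace F L ℓ • ⟨x, hx⟩ := by
  ext t
  simp [galoisTrace_apply, hx _ (_⁻¹ • t), Algebra.smul_def, trace_eq_sum_automorphisms,
    Finset.sum_mul]

end GaloisTrace

theorem galoisInvariantsTensorMap_tmul {F L : Type*} [Field F] [Field L] [Algebra F L]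
    {S : Type*} [MulAction (L ≃ₐ[F] L) S] (x : galoisInvariants F L S) (ℓ : L) :
    galoisInvariantsTensorMap F L S (x ⊗ₜ ℓ) = ℓ • (x : S → L) := rfl

section Descent

variable {F L : Type*} [Field F] [Field L] [Algebra F L] [FiniteDimensional F L]
  {S : Type*} [MulAction (L ≃ₐ[F] L) S] {ι : Type*} [Fintype ι]

noncomputable def galoisDescent (b d : ι → L) :
    (S → L) →ₗ[F] galoisInvariants F L S ⊗[F] L :=
  ∑ i, (TensorProduct.mk F _ L).flip (d i) ∘ₗ galoisTrace F L S ∘ₗ (b i • LinearMap.id)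

theorem galoisDescent_apply (b d : ι → L) (f : S → L) :
    galoisDescent b d f = ∑ i, galoisTrace F L S (b i • f) ⊗ₜ d i := by
  simp [galoisDescent]

variable [IsGalois F L] {b d : ι → L}

theorem galoisInvariantsTensorMap_galoisDescent (hbd : IsTraceDual F b d) (f : S → L) :
    galoisInvariantsTensorMap F L S (galoisDescent b d f) = f := by
  classical
  funext t
  simp only [galoisDescent_apply, map_sum, galoisInvariantsTensorMap_tmul, Finset.sum_apply,
    Pi.smul_apply, galoisTrace_apply, smul_eq_mul, map_mul, Finset.mul_sum]
  rw [Finset.sum_comm]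
  simp_rw [← mul_assoc, ← Finset.sum_mul, sum_mul_algEquiv_apply_of_isTraceDual hbd]
  simp

theorem galoisDescent_galoisInvariantsTensorMap (hbd : IsTraceDual F b d)
    (z : galoisInvariants F L S ⊗[F] L) :
    galoisDescent b d (galoisInvariantsTensorMap F L S z) = z := by
  induction z using TensorProduct.induction_on with
  | zero => simp
  | add z z' hz hz' => rw [map_add, map_add, hz, hz']
  | tmul x ℓ =>
    simp only [galoisInvariantsTensorMap_tmul, galoisDescent_apply, smul_smul,
      galoisTrace_smul_of_mem _ x.2, TensorProduct.smul_tmul, mul_comm (b _) ℓ]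
    rw [← TensorProduct.tmul_sum, hbd ℓ]

end Descent

theorem exists_isTraceDual (F L : Type*) [Field F] [Field L] [Algebra F L]
    [FiniteDimensional F L] [Algebra.IsSeparable F L] :
    ∃ b d : Fin (finrank F L) → L, IsTraceDual F b d := by
  let b := Module.finBasis F L
  let d := (Algebra.traceForm F L).dualBasis (traceForm_nondegenerate F L) b
  refine ⟨b, d, fun ℓ => ?_⟩
  simpa [d, LinearMap.BilinForm.dualBasis_repr_apply] using d.sum_repr ℓ

theorem stmt1_general (F L : Type*) [Field F] [Field L] [Algebra F L]
    [FiniteDimensional F L] [IsGalois F L]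
    (S : Type*) [MulAction (L ≃ₐ[F] L) S] :
    Function.Bijective (galoisInvariantsTensorMap F L S) := by
  obtain ⟨b, d, hbd⟩ := exists_isTraceDual F L
  exact Function.bijective_iff_has_inverse.mpr ⟨galoisDescent b d,
    galoisDescent_galoisInvariantsTensorMap hbd, galoisInvariantsTensorMap_galoisDescent hbd⟩

/-- For a finite Galois extension `L/F` with group `G` and a finite `G`-set `S`, the
natural map `(L[S])^G ⊗_F L → L[S]` is an isomorphism (bijective). -/
theorem stmt1 (F L : Type*) [Field F] [Field L] [Algebra F L]
    [FiniteDimensional F L] [IsGalois F L]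
    (S : Type*) [Fintype S] [MulAction (L ≃ₐ[F] L) S] :
    Function.Bijective (galoisInvariantsTensorMap F L S) :=
  stmt1_general F L S
end

section
/- Let B be a δ × δ block matrix whose (ν,τ) block B_ν^τ (for ν ≠ τ) is of the form C_ν^τ · ω_{ντ}, where C_ν^τ is an N × N matrix of scalars and ω_{ντ} = d log(a_ν - a_τ) are 1-forms satisfying: for any sequence τ, τ_{j_1}, ..., τ_{j_a}, τ with all τ_{j_i} ≠ τ, the wedge product ω_{τ τ_{j_1}} ∧ ω_{τ_{j_1} τ_{j_2}} ∧ ... ∧ ω_{τ_{j_a} τ} = 0 whenever a ≥ 1 (this holds because the forms ω_{ντ} = d log(a_ν - a_τ) and the relation (a_ν - a_τ) + (a_τ - a_θ) + (a_θ - a_ν) = 0 force such cyclic products to vanish). Then for any noncommuting monomial M(B) = B^{r_1}(dB)^{r_2} ⋯ B^{r_{2s-1}}(dB)^{r_{2s}}, one has Tr(M(B)) = ∑_{τ=1}^{δ} Tr(M(B_τ^τ)). -/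
lemma chainConst {α : Type*} {n : ℕ} (f : Fin (n+1) → α)
    (h : ∀ j : Fin n, f j.castSucc = f j.succ) : ∀ k, f k = f 0 := by
  intro k
  induction k using Fin.induction with
  | zero => rfl
  | succ i ih => rw [← h i]; exact ih

lemma groupChain {A : Type*} [Ring A] {δ : ℕ} (ω : Fin δ → Fin δ → A) :
    ∀ (n : ℕ) (c : Fin (n+1) → Fin δ) (x : Fin n → A),
    (∀ k : Fin n, c k.castSucc ≠ c k.succ → ∃ y, x k = y * ω (c k.castSucc) (c k.succ)) →
    (∃ k : Fin n, c k.castSucc ≠ c k.succ) →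
    ∃ m, 1 ≤ m ∧ ∃ (c' : Fin (m+1) → Fin δ) (y : Fin m → A) (r : A),
      c' 0 = c 0 ∧ c' (Fin.last m) = c (Fin.last n) ∧
      (∀ i : Fin m, c' i.castSucc ≠ c' i.succ) ∧
      (List.ofFn x).prod = (List.ofFn (fun i : Fin m => y i * ω (c' i.castSucc) (c' i.succ))).prod * r := by
  intro n
  induction n with
  | zero => rintro c x _ ⟨k, _⟩; exact absurd k.pos (by omega)
  | succ n ih =>
    intro c x hx hch
    set ct : Fin (n+1) → Fin δ := fun k => c k.succ with hct
    set xt : Fin n → A := fun k => x k.succ with hxt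
    have hctc : ∀ k : Fin n, ct k.castSucc = c k.succ.castSucc := by
      intro k; simp [hct, ← Fin.succ_castSucc]
    have hxtail : ∀ k : Fin n, ct k.castSucc ≠ ct k.succ →
        ∃ y, xt k = y * ω (ct k.castSucc) (ct k.succ) := by
      intro k hk
      rw [hctc k] at hk ⊢
      exact hx k.succ hk
    have hlast : ct (Fin.last n) = c (Fin.last (n+1)) := by
      simp [hct, Fin.succ_last]
    have e1 : (List.ofFn x).prod = x 0 * (List.ofFn xt).prod := by
      rw [List.ofFn_succ, List.prod_cons]
    have hc01 : (c (0 : Fin (n+1)).castSucc = c (0:Fin (n+1)).succ) ↔ (c 0 = c 1) := by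
      norm_num
    by_cases h01 : c 0 = c 1
    · -- diagonal head
      obtain ⟨k, hk⟩ := hch
      have hk0 : k ≠ 0 := by rintro rfl; exact hk (hc01.mpr h01)
      obtain ⟨j, rfl⟩ : ∃ j : Fin n, k = j.succ := ⟨k.pred hk0, by simp⟩
      have hchT : ∃ k : Fin n, ct k.castSucc ≠ ct k.succ := by
        refine ⟨j, ?_⟩; rw [hctc j]; exact hk
      obtain ⟨m, hm, c', y, r, h0, hl, hne, hprod⟩ := ih ct xt hxtail hchT
      obtain ⟨m, rfl⟩ : ∃ m', m = m' + 1 := ⟨m - 1, by omega⟩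
      refine ⟨m + 1, by omega, c', Function.update y 0 (x 0 * y 0), r, ?_, ?_, hne, ?_⟩
      · rw [h0]
        show ct 0 = c 0
        rw [hct]
        exact h01.symm
      · rwa [hlast] at hl
      · have key : x 0 * (List.ofFn (fun i : Fin (m+1) => y i * ω (c' i.castSucc) (c' i.succ))).prod
            = (List.ofFn (fun i : Fin (m+1) => Function.update y 0 (x 0 * y 0) i * ω (c' i.castSucc) (c' i.succ))).prod := by
          rw [List.ofFn_succ, List.ofFn_succ, List.prod_cons, List.prod_cons, ← mul_assoc]
          simp [Function.update_apply, Fin.succ_ne_zero, mul_assoc]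
        rw [e1, hprod, ← mul_assoc, key]
    · -- change head
      obtain ⟨y0, hy0⟩ := hx 0 (fun h => h01 (hc01.mp h))
      have hy0' : x 0 = y0 * ω (c 0) (c 1) := by
        convert hy0 using 3 <;> norm_num
      by_cases hchT : ∃ k : Fin n, ct k.castSucc ≠ ct k.succ
      · obtain ⟨m, hm, c', y, r, h0, hl, hne, hprod⟩ := ih ct xt hxtail hchT
        refine ⟨m + 1, by omega, Fin.cons (c 0) c', Fin.cons y0 y, r, ?_, ?_, ?_, ?_⟩
        · simp
        · rw [← Fin.succ_last, Fin.cons_succ]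
          rwa [hlast] at hl
        · intro i
          induction i using Fin.cases with
          | zero =>
            simpa [h0, hct] using fun h => h01 h
          | succ j =>
            have e2 : (Fin.cons (c 0) c' : Fin (m+2) → Fin δ) j.succ.castSucc = c' j.castSucc := by
              rw [← Fin.succ_castSucc, Fin.cons_succ]
            have e3 : (Fin.cons (c 0) c' : Fin (m+2) → Fin δ) j.succ.succ = c' j.succ := by
              rw [Fin.cons_succ]
            rw [e2, e3]; exact hne j
        · have h0' : c' 0 = c 1 := by
            rw [h0]
            show c (Fin.succ 0) = c 1
            rw [Fin.succ_zero_eq_one]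
          have etail : ∀ i : Fin m, (Fin.cons y0 y : Fin (m+1) → A) i.succ *
              ω ((Fin.cons (c 0) c' : Fin (m+2) → Fin δ) i.succ.castSucc)
                ((Fin.cons (c 0) c' : Fin (m+2) → Fin δ) i.succ.succ)
              = y i * ω (c' i.castSucc) (c' i.succ) := by
            intro i
            rw [← Fin.succ_castSucc, Fin.cons_succ, Fin.cons_succ, Fin.cons_succ]
          rw [e1, hprod, ← mul_assoc, List.ofFn_succ, List.prod_cons]
          simp only [etail]
          congr 1
          simp only [Fin.cons_zero, Fin.castSucc_zero, Fin.cons_succ, h0']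
          rw [hy0']
      · -- tail constant
        have hconst : ∀ k, ct k = ct 0 := by
          apply chainConst
          intro j
          by_contra h
          exact hchT ⟨j, h⟩
        refine ⟨1, le_refl 1, ![c 0, c 1], ![y0], (List.ofFn xt).prod, ?_, ?_, ?_, ?_⟩
        · rfl
        · show c 1 = c (Fin.last (n+1))
          rw [← hlast, hconst (Fin.last n)]
          simp [hct, Fin.succ_zero_eq_one]
        · intro i
          fin_cases i
          simpa using h01
        · rw [e1, hy0']
          congr 1
          simp

lemma vanishChain {A : Type*} [Ring A] {δ : ℕ} (ω : Fin δ → Fin δ → A)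
    (hcyc : ∀ (a : ℕ), 1 ≤ a → ∀ c : Fin (a + 2) → Fin δ,
      c 0 = c (Fin.last (a + 1)) →
      (∀ i : Fin (a + 1), c i.castSucc ≠ c i.succ) →
      ∀ y : Fin (a + 1) → A,
        (List.ofFn (fun i : Fin (a + 1) => y i * ω (c i.castSucc) (c i.succ))).prod = 0)
    (n : ℕ) (c : Fin (n+1) → Fin δ) (x : Fin n → A)
    (hx : ∀ k : Fin n, c k.castSucc ≠ c k.succ → ∃ y, x k = y * ω (c k.castSucc) (c k.succ))
    (hclosed : c 0 = c (Fin.last n))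
    (hch : ∃ k : Fin n, c k.castSucc ≠ c k.succ) :
    (List.ofFn x).prod = 0 := by
  obtain ⟨m, hm, c', y, r, h0, hl, hne, hprod⟩ := groupChain ω n c x hx hch
  have hm2 : 2 ≤ m := by
    rcases Nat.lt_or_ge m 2 with h | h
    · interval_cases m
      exfalso
      apply hne 0
      rw [show (0 : Fin 1).castSucc = (0 : Fin 2) from rfl, show (0:Fin 1).succ = Fin.last 1 from rfl,
          h0, hl, ← hclosed]
    · exact h
  obtain ⟨a, rfl⟩ : ∃ a, m = a + 1 := ⟨m - 1, by omega⟩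
  have hclosed' : c' 0 = c' (Fin.last (a+1)) := by rw [h0, hl, hclosed]
  rw [hprod, hcyc a (by omega) c' hclosed' hne y, zero_mul]

lemma prodEntry {A : Type*} [Ring A] {I : Type*} [Fintype I] [DecidableEq I] :
    ∀ (n : ℕ) (M : Fin n → Matrix I I A) (i j : I),
    (List.ofFn M).prod i j
      = ∑ p : Fin n → I, if (Fin.cons i p : Fin (n+1) → I) (Fin.last n) = j then
          (List.ofFn fun k : Fin n =>
            M k ((Fin.cons i p : Fin (n+1) → I) k.castSucc)
              ((Fin.cons i p : Fin (n+1) → I) k.succ)).prod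
        else 0 := by
  intro n
  induction n with
  | zero =>
    intro M i j
    rw [List.ofFn_zero, List.prod_nil]
    rw [Fintype.sum_unique]
    simp [Matrix.one_apply]
  | succ n ih =>
    intro M i j
    have e0 : (List.ofFn M).prod = M 0 * (List.ofFn fun k : Fin n => M k.succ).prod := by
      rw [List.ofFn_succ, List.prod_cons]
    rw [e0, Matrix.mul_apply]
    rw [← Equiv.sum_comp (Fin.consEquiv (fun _ : Fin (n+1) => I))
      (fun p => if (Fin.cons i p : Fin (n+2) → I) (Fin.last (n+1)) = j then
          (List.ofFn fun k : Fin (n+1) =>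
            M k ((Fin.cons i p : Fin (n+2) → I) k.castSucc)
              ((Fin.cons i p : Fin (n+2) → I) k.succ)).prod
        else 0)]
    rw [Fintype.sum_prod_type]
    apply Finset.sum_congr rfl
    intro k _
    rw [ih (fun l => M l.succ) k j, Finset.mul_sum]
    apply Finset.sum_congr rfl
    intro p _
    have he : (Fin.consEquiv (fun _ : Fin (n+1) => I)) (k, p) = Fin.cons k p := rfl
    rw [he, mul_ite, mul_zero]
    have hcond : (Fin.cons i (Fin.cons k p) : Fin (n+2) → I) (Fin.last (n+1))
        = (Fin.cons k p : Fin (n+1) → I) (Fin.last n) := by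
      rw [← Fin.succ_last, Fin.cons_succ]
    rw [hcond]
    by_cases hc : (Fin.cons k p : Fin (n+1) → I) (Fin.last n) = j
    · rw [if_pos hc, if_pos hc]
      rw [List.ofFn_succ, List.prod_cons]
      congr 1
    · rw [if_neg hc, if_neg hc]

lemma traceExpand {A : Type*} [Ring A] {I : Type*} [Fintype I] [DecidableEq I]
    (n : ℕ) (M : Fin n → Matrix I I A) :
    Matrix.trace (List.ofFn M).prod
      = ∑ q : Fin (n+1) → I, if q (Fin.last n) = q 0 then
          (List.ofFn fun k : Fin n => M k (q k.castSucc) (q k.succ)).prod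
        else 0 := by
  rw [← Equiv.sum_comp (Fin.consEquiv (fun _ : Fin (n+1) => I))
    (fun q => if q (Fin.last n) = q 0 then
          (List.ofFn fun k : Fin n => M k (q k.castSucc) (q k.succ)).prod
        else 0)]
  rw [Fintype.sum_prod_type]
  have ht : Matrix.trace (List.ofFn M).prod = ∑ i : I, (List.ofFn M).prod i i := by
    simp [Matrix.trace, Matrix.diag]
  rw [ht]
  apply Finset.sum_congr rfl
  intro i _
  rw [prodEntry n M i i]
  apply Finset.sum_congr rfl
  intro p _
  have he : (Fin.consEquiv (fun _ : Fin (n+1) => I)) (i, p) = Fin.cons i p := rfl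
  rw [he, Fin.cons_zero]

/-- Lemma 4.3 of Bloch–Esnault, abstracted.  Let `B`, `D` (playing the roles of the
connection matrix `B` and its derivative `dB`) be `δ × δ` block matrices with `N × N`
blocks, with entries in a ring `A` (the exterior algebra of forms).  Assume every entry of
an off-diagonal `(ν,τ)`-block is a right multiple of a fixed element `ω ν τ`
(`ω ν τ = d log (a_ν − a_τ)`), and that every "cyclic" product
`(y₀ · ω_{c₀ c₁}) ⋯ (y_a · ω_{c_a c_{a+1}})` along a closed chain `c` with at least two
steps and consecutive indices distinct vanishes.  Then for every noncommuting monomial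
`M(B)` in `B` and `dB` (encoded by a nonempty word `W` of booleans), one has
`Tr (M(B)) = ∑_τ Tr (M(B_τ^τ))`, the monomial evaluated at the diagonal blocks. -/
theorem stmt5 (A : Type*) [Ring A] (δ N : ℕ)
    (ω : Fin δ → Fin δ → A)
    (B D : Matrix (Fin δ × Fin N) (Fin δ × Fin N) A)
    (hB : ∀ ν τ : Fin δ, ν ≠ τ → ∀ i j : Fin N, ∃ y : A, B (ν, i) (τ, j) = y * ω ν τ)
    (hD : ∀ ν τ : Fin δ, ν ≠ τ → ∀ i j : Fin N, ∃ y : A, D (ν, i) (τ, j) = y * ω ν τ)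
    (hcyc : ∀ (a : ℕ), 1 ≤ a → ∀ c : Fin (a + 2) → Fin δ,
      c 0 = c (Fin.last (a + 1)) →
      (∀ i : Fin (a + 1), c i.castSucc ≠ c i.succ) →
      ∀ y : Fin (a + 1) → A,
        (List.ofFn (fun i : Fin (a + 1) => y i * ω (c i.castSucc) (c i.succ))).prod = 0)
    (W : List Bool) (hW : W ≠ []) :
    Matrix.trace ((W.map (fun b => if b then B else D)).prod)
      = ∑ τ : Fin δ, Matrix.trace
          ((W.map (fun b => Matrix.of fun i j : Fin N =>
            (if b then B else D) (τ, i) (τ, j))).prod) := by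
  classical
  set n := W.length with hn
  set M : Fin n → Matrix (Fin δ × Fin N) (Fin δ × Fin N) A :=
    fun k => if W.get k then B else D with hM
  have hL : W.map (fun b => if b then B else D) = List.ofFn M := by
    conv_lhs => rw [← List.ofFn_get W]
    rw [List.map_ofFn]
    rfl
  have hR : ∀ τ : Fin δ,
      W.map (fun b => Matrix.of fun i j : Fin N => (if b then B else D) (τ, i) (τ, j))
        = List.ofFn (fun k : Fin n => Matrix.of fun i j : Fin N => M k (τ, i) (τ, j)) := by
    intro τ
    conv_lhs => rw [← List.ofFn_get W]
    rw [List.map_ofFn]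
    rfl
  rw [hL, traceExpand]
  have hRT : (∑ τ : Fin δ, Matrix.trace
          ((W.map (fun b => Matrix.of fun i j : Fin N =>
            (if b then B else D) (τ, i) (τ, j))).prod))
      = ∑ τ : Fin δ, ∑ u : Fin (n+1) → Fin N, (if u (Fin.last n) = u 0 then
          (List.ofFn fun k : Fin n =>
            (Matrix.of fun i j : Fin N => M k (τ, i) (τ, j)) (u k.castSucc) (u k.succ)).prod
        else 0) :=
    Finset.sum_congr rfl fun τ _ => by rw [hR τ, traceExpand]
  rw [hRT]
  set F : (Fin (n+1) → Fin δ × Fin N) → A := fun q =>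
    if q (Fin.last n) = q 0 then
      (List.ofFn fun k : Fin n => M k (q k.castSucc) (q k.succ)).prod
    else 0 with hF
  show ∑ q : Fin (n+1) → Fin δ × Fin N, F q = _
  set e2 : (Fin (n+1) → Fin δ) × (Fin (n+1) → Fin N) ≃ (Fin (n+1) → Fin δ × Fin N) :=
    { toFun := fun p x => (p.1 x, p.2 x)
      invFun := fun q => (fun x => (q x).1, fun x => (q x).2)
      left_inv := fun p => rfl
      right_inv := fun q => rfl } with he2
  rw [← Equiv.sum_comp e2 F, Fintype.sum_prod_type]
  have hcomp : ∀ c u, F (e2 (c, u)) = F (fun x => (c x, u x)) := fun _ _ => by rw [he2]; simp only [Equiv.coe_fn_mk]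
  simp only [hcomp]
  -- Step A: vanishing for nonconstant chains
  have stepA : ∀ (c : Fin (n+1) → Fin δ) (u : Fin (n+1) → Fin N),
      (¬ ∀ k : Fin n, c k.castSucc = c k.succ) → F (fun x => (c x, u x)) = 0 := by
    intro c u hc
    push_neg at hc
    rw [hF]
    by_cases hq : ((fun x => (c x, u x)) (Fin.last n)) = ((fun x => (c x, u x)) 0)
    · simp only [if_pos hq]
      have hclosed : c 0 = c (Fin.last n) := by
        have := congrArg Prod.fst hq
        simpa using this.symm
      apply vanishChain ω hcyc n c
        (fun k => M k (c k.castSucc, u k.castSucc) (c k.succ, u k.succ)) ?_ hclosed hc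
      intro k hk
      by_cases hb : W.get k
      · simp only [hM, hb, if_true]
        exact hB _ _ hk _ _
      · simp only [hM, hb, if_false]
        exact hD _ _ hk _ _
    · simp only [if_neg hq]
  -- Steps B/C: reduce to constant chains
  have stepBC : ∑ c : Fin (n+1) → Fin δ, ∑ u : Fin (n+1) → Fin N, F (fun x => (c x, u x))
      = ∑ τ : Fin δ, ∑ u : Fin (n+1) → Fin N, F (fun x => ((τ : Fin δ), u x)) := by
    have step1 : ∀ c : Fin (n+1) → Fin δ,
        (∑ u : Fin (n+1) → Fin N, F (fun x => (c x, u x)))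
          = ∑ τ : Fin δ, if c = (fun _ => τ) then
              (∑ u : Fin (n+1) → Fin N, F (fun x => (c x, u x))) else 0 := by
      intro c
      by_cases hP : ∀ k : Fin n, c k.castSucc = c k.succ
      · have hcc : c = fun _ => c 0 := funext (chainConst c hP)
        rw [Finset.sum_eq_single (c 0)]
        · rw [if_pos hcc]
        · intro τ _ hτ
          exact if_neg fun h => hτ (congrFun h 0).symm
        · intro h
          exact absurd (Finset.mem_univ _) h
      · have h0 : (∑ u : Fin (n+1) → Fin N, F (fun x => (c x, u x))) = 0 :=
          Finset.sum_eq_zero fun u _ => stepA c u hP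
        rw [h0]
        exact (Finset.sum_eq_zero fun τ _ => if_neg fun h => hP fun k => by rw [h]).symm
    calc ∑ c : Fin (n+1) → Fin δ, ∑ u : Fin (n+1) → Fin N, F (fun x => (c x, u x))
        = ∑ c : Fin (n+1) → Fin δ, ∑ τ : Fin δ, if c = (fun _ => τ) then
            (∑ u : Fin (n+1) → Fin N, F (fun x => (c x, u x))) else 0 :=
          Finset.sum_congr rfl fun c _ => step1 c
      _ = ∑ τ : Fin δ, ∑ c : Fin (n+1) → Fin δ, if c = (fun _ => τ) then
            (∑ u : Fin (n+1) → Fin N, F (fun x => (c x, u x))) else 0 := Finset.sum_comm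
      _ = ∑ τ : Fin δ, ∑ u : Fin (n+1) → Fin N, F (fun x => ((τ : Fin δ), u x)) := by
          apply Finset.sum_congr rfl
          intro τ _
          rw [Finset.sum_ite_eq' Finset.univ (fun _ => τ)
            (fun c => ∑ u : Fin (n+1) → Fin N, F (fun x => (c x, u x))), if_pos (Finset.mem_univ _)]
  rw [stepBC]
  -- Step E: identify with block traces
  apply Finset.sum_congr rfl
  intro τ _
  apply Finset.sum_congr rfl
  intro u _
  simp only [hF]
  by_cases hu : u (Fin.last n) = u 0
  · rw [if_pos (show ((τ : Fin δ), u (Fin.last n)) = (τ, u 0) from by rw [hu]), if_pos hu]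
    rfl
  · rw [if_neg (fun h => hu (congrArg Prod.snd h)), if_neg hu]
end

section
/- Let R be a local ring containing ℚ with maximal ideal generated by a regular element t, d: R → Ω a derivation with Ω a free R-module, and M an R-module with a connection ∇: M → M ⊗ Ω (satisfying ∇(rm) = r∇(m) + m ⊗ dr). Suppose dt is part of a basis of Ω. If t^n · M_tors = 0 for some n ≥ 1 and ∇ has no poles (∇ maps M into M ⊗ Ω), then t^{n-1}·M_tors = 0; consequently M_tors = 0. -/
open scoped TensorProduct

/-- Local form of the torsion-vanishing step in Lemma 3.6 of Bloch–Esnault.  Let `R` be a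
local ring containing `ℚ` whose maximal ideal is generated by a regular element `t`, let
`d : R → Ω` be a derivation into a free module `Ω` such that `d t` is part of a basis of
`Ω`, and let `conn : M → M ⊗ Ω` be a (pole-free) connection on an `R`-module `M`.  If
`t^n` kills the torsion submodule `M_tors = {m | ∃ k, t^k m = 0}` with `n ≥ 1`, then
already `t^{n-1}` kills it; consequently `M_tors = 0`. -/
theorem stmt11 (R : Type*) [CommRing R] [IsLocalRing R] [Algebra ℚ R]
    (t : R) (hreg : ∀ x : R, t * x = 0 → x = 0)
    (hmax : Ideal.span {t} = IsLocalRing.maximalIdeal R)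
    (Ω : Type*) [AddCommGroup Ω] [Module R Ω]
    (d : R → Ω)
    (hd_add : ∀ a b : R, d (a + b) = d a + d b)
    (hd_leib : ∀ a b : R, d (a * b) = a • d b + b • d a)
    (ι : Type*) (bΩ : Module.Basis ι R Ω) (i₀ : ι) (hbt : bΩ i₀ = d t)
    (M : Type*) [AddCommGroup M] [Module R M]
    (conn : M → M ⊗[R] Ω)
    (hconn_add : ∀ m m' : M, conn (m + m') = conn m + conn m')
    (hconn_leib : ∀ (r : R) (m : M), conn (r • m) = r • conn m + m ⊗ₜ[R] d r)
    (n : ℕ) (hn : ∀ m : M, (∃ k : ℕ, t ^ k • m = 0) → t ^ n • m = 0) :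
    (1 ≤ n → ∀ m : M, (∃ k : ℕ, t ^ k • m = 0) → t ^ (n - 1) • m = 0) ∧
    (∀ m : M, (∃ k : ℕ, t ^ k • m = 0) → m = 0) := by
  -- conn 0 = 0
  have hconn0 : conn 0 = 0 := by
    have := hconn_add 0 0
    simp only [add_zero] at this
    exact left_eq_add.mp this
  -- d (t^(k+1)) = ((k+1) * t^k) • d t
  have hdpow : ∀ k : ℕ, d (t ^ (k + 1)) = (((k : R) + 1) * t ^ k) • d t := by
    intro k
    induction k with
    | zero => simp
    | succ k ih =>
      have : t ^ (k + 2) = t * t ^ (k + 1) := by ring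
      rw [this, hd_leib, ih, smul_smul]
      rw [pow_succ]
      module
  -- projection onto the dt-coordinate
  let π : M ⊗[R] Ω →ₗ[R] M :=
    TensorProduct.lift (LinearMap.mk₂ R (fun m ω => bΩ.coord i₀ ω • m)
      (fun m m' ω => by rw [smul_add])
      (fun r m ω => by rw [smul_comm])
      (fun m ω ω' => by rw [map_add, add_smul])
      (fun r m ω => by rw [map_smul, smul_assoc]))
  have hπ : ∀ (m : M) (ω : Ω), π (m ⊗ₜ[R] ω) = bΩ.coord i₀ ω • m := fun m ω => rfl
  have hcoord : bΩ.coord i₀ (d t) = 1 := by rw [← hbt]; simp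
  -- key step
  have key : ∀ j : ℕ, (∀ m : M, (∃ k : ℕ, t ^ k • m = 0) → t ^ (j + 1) • m = 0) →
      ∀ m : M, (∃ k : ℕ, t ^ k • m = 0) → t ^ j • m = 0 := by
    intro j hj m hm
    obtain ⟨k, hk⟩ := hm
    rcases k with _ | l
    · simp only [pow_zero, one_smul] at hk
      rw [hk, smul_zero]
    -- conn m is torsion
    have h1 : conn (t ^ (l + 1) • m) = 0 := by rw [hk, hconn0]
    rw [hconn_leib, hdpow] at h1
    have h2 : t ^ (l + 1) • (t ^ (l + 1) • conn m) = 0 := by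
      have := congrArg (fun x => t ^ (l + 1) • x) h1
      simp only [smul_add, smul_zero] at this
      simp only [TensorProduct.smul_tmul', hk, TensorProduct.zero_tmul, smul_zero,
        add_zero] at this
      exact this
    rw [smul_smul, ← pow_add] at h2
    have htors : ∃ k : ℕ, t ^ k • π (conn m) = 0 := ⟨l + 1 + (l + 1), by rw [← map_smul, h2, map_zero]⟩
    have h3 : t ^ (j + 1) • π (conn m) = 0 := hj _ htors
    -- apply conn to t^(j+1) • m = 0
    have h4 : conn (t ^ (j + 1) • m) = 0 := by rw [hj m ⟨l + 1, hk⟩, hconn0]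
    rw [hconn_leib, hdpow] at h4
    have h5 := congrArg π h4
    rw [map_add, map_smul, h3, map_zero, zero_add, hπ, map_smul, hcoord, smul_eq_mul,
      mul_one] at h5
    -- h5 : ((j:R)+1) * t^j • m = 0 ; divide by j+1
    have hinv : algebraMap ℚ R (((j : ℚ) + 1)⁻¹) * ((j : R) + 1) = 1 := by
      have : ((j : R) + 1) = algebraMap ℚ R ((j : ℚ) + 1) := by
        push_cast
        simp
      rw [this, ← map_mul]
      rw [inv_mul_cancel₀ (by positivity)]
      simp
    calc t ^ j • m = (algebraMap ℚ R (((j : ℚ) + 1)⁻¹) * (((j : R) + 1) * t ^ j)) • m := by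
          rw [← mul_assoc, hinv, one_mul]
      _ = algebraMap ℚ R (((j : ℚ) + 1)⁻¹) • ((((j : R) + 1) * t ^ j) • m) := by
          rw [mul_smul]
      _ = 0 := by rw [h5, smul_zero]
  constructor
  · intro hn1 m hm
    obtain ⟨j, rfl⟩ := Nat.exists_eq_add_of_le hn1
    simpa using key j (by simpa [Nat.add_comm] using hn) m hm
  · -- iterate down
    have : ∀ N : ℕ, (∀ m : M, (∃ k : ℕ, t ^ k • m = 0) → t ^ N • m = 0) →
        ∀ m : M, (∃ k : ℕ, t ^ k • m = 0) → m = 0 := by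
      intro N
      induction N with
      | zero => intro h m hm; simpa using h m hm
      | succ N ih => intro h m hm; exact ih (key N h) m hm
    exact this n hn
end

section
/- Let g : Spec M → Spec L be induced by a finite étale L-algebra M = L[t]/(φ(t)) over a field L of characteristic 0, with φ separable of degree r, and let E = M^N with connection ∇ given by an N×N matrix A(t) = ∑_{i=0}^{r-1} t^i A_i with A_i matrices over L ⊗ Ω^1. Writing α_i = Tr(A_i) ∈ L-coefficients, the trace of the connection matrix of the pushforward connection g_*∇ on g_*E ≅ L^{rN} in the basis {t^i e_j} equals Tr_{M/L}(∑_{i=0}^{r-1} t^i α_i) + N·∑_{j=0}^{r-1} β_{jj}, where d(t^j) = ∑_{i=0}^{r-1} t^i β_{ji} in M ⊗ Ω^1. Equivalently, w_1(g_*E, g_*∇) = g_*(w_1(E,∇)) + N·w_1(g_*M, g_*d). -/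
/-! Applying the coordinate functional dual to `t^i e_j` to the Leibniz expansion `hC` shows that
the diagonal entry `C (i, j) (i, j)` is the `t^i`-coordinate of `t^i • A j j` plus `β i i`.
Summed over `i`, these coordinates give `Tr_{M/L}` of `A j j`, because the trace of multiplication
by `s` is `∑ i, coord_i (t^i s)`; summing over `j` as well gives the formula. -/

open TensorProduct LinearMap

section TensorCoordinates

variable {R V Ω : Type*} [CommRing R] [AddCommMonoid V] [Module R V] [AddCommMonoid Ω] [Module R Ω]

lemma lid_rTensor_sum_tmul_of_dual {ι : Type*} [Fintype ι] [DecidableEq ι]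
    (f : V →ₗ[R] R) (v : ι → V) (c : ι → Ω) (i : ι)
    (hf : ∀ j, f (v j) = if j = i then 1 else 0) :
    TensorProduct.lid R Ω (f.rTensor Ω (∑ j, v j ⊗ₜ[R] c j)) = c i := by
  simp only [map_sum, rTensor_tmul, lid_tmul, hf, ite_smul, one_smul, zero_smul,
    Finset.sum_ite_eq', Finset.mem_univ, if_true]

lemma rTensor_comp_proj_rTensor_single {κ : Type*} [DecidableEq κ] {S : Type*}
    [AddCommMonoid S] [Module R S] (f : S →ₗ[R] R) (j k : κ) (x : S ⊗[R] Ω) :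
    (f.comp (proj j)).rTensor Ω ((single R (fun _ : κ => S) k).rTensor Ω x)
      = if k = j then f.rTensor Ω x else 0 := by
  rw [← rTensor_comp_apply, comp_assoc]
  split_ifs with h
  · rw [h, proj_comp_single_same, comp_id]
  · rw [proj_comp_single_ne _ _ j k (Ne.symm h), comp_zero, rTensor_zero, LinearMap.zero_apply]

lemma Module.Basis.coord_comp_proj_smul_single {ι κ S : Type*} [DecidableEq ι] [DecidableEq κ]
    [Semiring S] [Module R S] (b : Module.Basis ι R S) (i : ι) (j : κ) (p : ι × κ) :
    ((b.coord i).comp (proj j)) (b p.1 • Pi.single p.2 (1 : S))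
      = if p = (i, j) then 1 else 0 := by
  obtain ⟨i', j'⟩ := p
  rcases eq_or_ne j' j with rfl | hj
  · simp [Finsupp.single_apply]
  · simp [Ne.symm hj, hj]

lemma Algebra.trace_eq_sum_coord_mul {ι S : Type*} [Fintype ι] [DecidableEq ι] [CommRing S]
    [Algebra R S] (b : Module.Basis ι R S) (s : S) :
    Algebra.trace R S s = ∑ i, b.coord i (b i * s) := by
  simp [Algebra.trace_eq_matrix_trace b, Matrix.trace, Algebra.leftMulMatrix_eq_repr_mul, mul_comm]

lemma sum_lid_rTensor_coord_smul {ι S : Type*} [Fintype ι] [DecidableEq ι] [CommRing S]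
    [Algebra R S] (b : Module.Basis ι R S) (x : S ⊗[R] Ω) :
    ∑ i, TensorProduct.lid R Ω ((b.coord i).rTensor Ω (b i • x))
      = TensorProduct.lid R Ω ((Algebra.trace R S).rTensor Ω x) := by
  induction x using TensorProduct.induction_on with
  | zero => simp
  | tmul s ω =>
    simp only [smul_tmul', smul_eq_mul, rTensor_tmul, lid_tmul, ← Finset.sum_smul,
      Algebra.trace_eq_sum_coord_mul b]
  | add x y hx hy => simp only [smul_add, map_add, Finset.sum_add_distrib, hx, hy]

end TensorCoordinates

theorem stmt13_general (L : Type) [Field L]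
    (Ω : Type) [AddCommGroup Ω] [Module L Ω]
    (M : Type) [CommRing M] [Algebra L M]
    (r : ℕ) (t : M) (b : Module.Basis (Fin r) L M) (hb : ∀ i : Fin r, b i = t ^ (i : ℕ))
    (dM : M → M ⊗[L] Ω)
    (N : ℕ)
    (A : Matrix (Fin N) (Fin N) (M ⊗[L] Ω))
    (β : Fin r → Fin r → Ω)
    (hβ : ∀ i : Fin r, dM (t ^ (i : ℕ)) = ∑ i' : Fin r, (t ^ (i' : ℕ)) ⊗ₜ[L] β i i')
    (C : Matrix (Fin r × Fin N) (Fin r × Fin N) Ω)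
    (hC : ∀ (i : Fin r) (j : Fin N),
      (∑ k : Fin N,
        (LinearMap.single L (fun _ : Fin N => M) k).rTensor Ω ((t ^ (i : ℕ)) • A k j))
        + (LinearMap.single L (fun _ : Fin N => M) j).rTensor Ω (dM (t ^ (i : ℕ)))
      = ∑ p : Fin r × Fin N,
          ((t ^ (p.1 : ℕ)) • (Pi.single p.2 1 : Fin N → M)) ⊗ₜ[L] C p (i, j)) :
    ∑ p : Fin r × Fin N, C p p
      = (TensorProduct.lid L Ω) ((Algebra.trace L M).rTensor Ω (∑ k, A k k))
        + N • ∑ i, β i i := by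
  simp only [← hb] at hβ hC
  have diagonal_entry : ∀ i j, C (i, j) (i, j)
      = TensorProduct.lid L Ω ((b.coord i).rTensor Ω (b i • A j j)) + β i i := by
    intro i j
    have h := congrArg (fun x => TensorProduct.lid L Ω
      (((b.coord i).comp (proj j : (Fin N → M) →ₗ[L] M)).rTensor Ω x)) (hC i j)
    rw [lid_rTensor_sum_tmul_of_dual _ _ _ _ (b.coord_comp_proj_smul_single i j)] at h
    rw [map_add, map_add, map_sum, map_sum] at h
    simp only [rTensor_comp_proj_rTensor_single, apply_ite, map_zero, Finset.sum_ite_eq',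
      Finset.mem_univ, if_true] at h
    rw [hβ, lid_rTensor_sum_tmul_of_dual _ _ _ i (b.repr_self_apply · i)] at h
    exact h.symm
  rw [Fintype.sum_prod_type_right]
  simp only [diagonal_entry, Finset.sum_add_distrib, sum_lid_rTensor_coord_smul, map_sum, Finset.sum_const,
    Finset.card_univ, Fintype.card_fin]

/-- Formula (3.25) of Bloch–Esnault.  Let `M = L[t]/(φ)` be a finite `L`-algebra with
power basis `1, t, …, t^{r-1}`, `dM : M → M ⊗_L Ω` a derivation, and let a connection on
`E = M^N` be given by a matrix `A` with entries in `M ⊗_L Ω`.  If `C` is the connection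
matrix of the pushforward connection `g_*∇` in the basis `{t^i e_j}` (characterized by
the Leibniz expansion hypothesis `hC`), then
`Tr C = Tr_{M/L}(Tr A) + N · Tr β`, where `d(t^j) = ∑_i t^i ⊗ β_{j i}`; that is,
`w₁(g_*E, g_*∇) = g_*(w₁(E, ∇)) + N · w₁(g_*M, g_*d)`. -/
theorem stmt13 (L : Type) [Field L] [CharZero L]
    (Ω : Type) [AddCommGroup Ω] [Module L Ω]
    (M : Type) [CommRing M] [Algebra L M]
    (r : ℕ) (t : M) (b : Module.Basis (Fin r) L M) (hb : ∀ i : Fin r, b i = t ^ (i : ℕ))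
    (dM : M → M ⊗[L] Ω)
    (hdM_add : ∀ x y : M, dM (x + y) = dM x + dM y)
    (hdM_leib : ∀ x y : M, dM (x * y) = x • dM y + y • dM x)
    (N : ℕ)
    (A : Matrix (Fin N) (Fin N) (M ⊗[L] Ω))
    (β : Fin r → Fin r → Ω)
    (hβ : ∀ i : Fin r, dM (t ^ (i : ℕ)) = ∑ i' : Fin r, (t ^ (i' : ℕ)) ⊗ₜ[L] β i i')
    (C : Matrix (Fin r × Fin N) (Fin r × Fin N) Ω)
    (hC : ∀ (i : Fin r) (j : Fin N),
      (∑ k : Fin N,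
        (LinearMap.single L (fun _ : Fin N => M) k).rTensor Ω ((t ^ (i : ℕ)) • A k j))
        + (LinearMap.single L (fun _ : Fin N => M) j).rTensor Ω (dM (t ^ (i : ℕ)))
      = ∑ p : Fin r × Fin N,
          ((t ^ (p.1 : ℕ)) • (Pi.single p.2 1 : Fin N → M)) ⊗ₜ[L] C p (i, j)) :
    ∑ p : Fin r × Fin N, C p p
      = (TensorProduct.lid L Ω) ((Algebra.trace L M).rTensor Ω (∑ k, A k k))
        + N • ∑ i, β i i :=
  stmt13_general L Ω M r t b hb dM N A β hβ C hC
end
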